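/- Let S_n be a random walk with i.i.d. jumps with positive mean μ, γ := P(inf_{k≥0} S_k = 0), and F_+(Δ) := P(ξ ≥ Δ). If Δ > 0 satisfies F_+(Δ) > 0, then for any n ≥ 1, the sum over k ≥ n of P(S_k ∈ [x, x+Δ)) is at most P(S_n + S̲⁽ⁿ⁾ < x + Δ) / (γ F_+(Δ)), where S̲⁽ⁿ⁾ := inf_{k≥n} (S_k − S_n). -/

import Mathlib

/-!
Let `escapeEvent ξ x Δ k` be the event that the walk is in `[x, x + Δ)` at time `k`, then jumps by
at least `Δ`, and afterwards never goes below `S (k + 1)`. On it, `k` is the last visit to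
`[x, x + Δ)`, so these events are disjoint. Independence of the past, the jump `ξ k` and the future,
together with the shift invariance of an i.i.d. sequence, gives
`P(escapeEvent k) = P(S k ∈ [x, x + Δ)) · F₊(Δ) · P(all partial sums ≥ 0)`, and the last factor is
at least `γ`. By the strong law the walk drifts to `+∞`; hence it is bounded below, so the infima
are genuine (in `ℝ`, `⨅` of an unbounded family is `0`), and every visit after time `n` happens on
`{S n + S̲⁽ⁿ⁾ < x + Δ}`.
-/

open MeasureTheory ProbabilityTheory Filter Finset

def nonnegPartialSums : Set (ℕ → ℝ) := {v | ∀ j, 0 ≤ ∑ i ∈ range j, v i}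

theorem measurableSet_nonnegPartialSums : MeasurableSet nonnegPartialSums := by
  simp only [nonnegPartialSums, Set.ofPred_forall]
  exact .iInter fun j => measurableSet_le measurable_const
    (Finset.measurable_sum _ fun i _ => measurable_pi_apply i)

theorem ciInf_le_of_tendsto_atTop {α : Type*} [ConditionallyCompleteLinearOrder α]
    {u : ℕ → α} (hu : Tendsto u atTop atTop) (k : ℕ) :
    ⨅ j, u j ≤ u k :=
  ciInf_le (bddBelow_range_of_tendsto_atTop_atTop hu) k

theorem add_iInf_sub_le_of_tendsto_atTop {u : ℕ → ℝ} (hu : Tendsto u atTop atTop) (n k : ℕ) :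
    u n + ⨅ j, (u (n + j) - u n) ≤ u (n + k) := by
  have hshift : Tendsto (fun j => u (n + j) - u n) atTop atTop :=
    tendsto_atTop_add_const_right _ _
      (hu.comp (tendsto_atTop_mono (fun j => Nat.le_add_left j n) tendsto_id))
  linarith [ciInf_le_of_tendsto_atTop hshift k]

theorem sum_range_le_of_shift_mem_nonnegPartialSums {v : ℕ → ℝ} {a b : ℕ}
    (hv : (fun m => v (a + m)) ∈ nonnegPartialSums) (hab : a ≤ b) :
    ∑ i ∈ range a, v i ≤ ∑ i ∈ range b, v i := by
  obtain ⟨j, rfl⟩ := Nat.exists_eq_add_of_le hab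
  rw [sum_range_add]
  linarith [hv j]

namespace ProbabilityTheory

variable {Ω : Type*} {mΩ : MeasurableSpace Ω} {μ : Measure Ω}

theorem iIndep.measure_inter_inter_eq_mul {ι : Type*} [LinearOrder ι]
    {m : ι → MeasurableSpace Ω} (h_le : ∀ i, m i ≤ mΩ) (h_indep : iIndep m μ) {k : ι}
    {s t u : Set Ω} (hs : MeasurableSet[⨆ i ∈ Set.Iio k, m i] s) (ht : MeasurableSet[m k] t)
    (hu : MeasurableSet[⨆ i ∈ Set.Ioi k, m i] u) :
    μ (s ∩ (t ∩ u)) = μ s * (μ t * μ u) := by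
  have ht' : MeasurableSet[⨆ i ∈ ({k} : Set ι), m i] t := by rwa [_root_.iSup_singleton]
  have htu : MeasurableSet[⨆ i ∈ Set.Ici k, m i] (t ∩ u) :=
    (le_biSup m (Set.mem_Ici.2 le_rfl) t ht).inter
      (biSup_mono (f := m) (fun _ hi => Set.Ioi_subset_Ici_self hi) u hu)
  rw [(Indep_iff _ _ _).1
      (indep_iSup_of_disjoint h_le h_indep (Set.Iio_disjoint_Ici le_rfl)) _ _ hs htu,
    (Indep_iff _ _ _).1 (indep_iSup_of_disjoint h_le h_indep (by simp)) _ _ ht' hu]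

theorem iIndepFun.map_shift_eq_map {β : Type*} {mβ : MeasurableSpace β} {X : ℕ → Ω → β}
    (hmeas : ∀ n, Measurable (X n)) (h_indep : iIndepFun X μ)
    (hident : ∀ n, IdentDistrib (X n) (X 0) μ μ) (c : ℕ) :
    μ.map (fun ω m => X (c + m) ω) = μ.map (fun ω m => X m ω) := by
  rw [(h_indep.precomp (add_right_injective c)).map_fun_eq_infinitePi_map (fun m => hmeas _),
    h_indep.map_fun_eq_infinitePi_map hmeas]
  congr 1
  funext m
  simp only [(hident _).map_eq]

theorem ae_tendsto_sum_range_atTop {X : ℕ → Ω → ℝ} (hint : Integrable (X 0) μ)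
    (h_indep : Pairwise fun i j => IndepFun (X i) (X j) μ)
    (hident : ∀ i, IdentDistrib (X i) (X 0) μ μ)
    (hpos : 0 < μ[X 0]) :
    ∀ᵐ ω ∂μ, Tendsto (fun n => ∑ i ∈ range n, X i ω) atTop atTop := by
  filter_upwards [strong_law_ae X hint h_indep hident] with ω hω
  refine (tendsto_natCast_atTop_atTop.atTop_mul_pos hpos hω).congr' ?_
  filter_upwards [eventually_ne_atTop 0] with n hn
  simp [smul_eq_mul, hn]

section RandomWalk

variable {ξ : ℕ → Ω → ℝ}

def escapeEvent (ξ : ℕ → Ω → ℝ) (x Δ : ℝ) (k : ℕ) : Set Ω :=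
  {ω | ∑ i ∈ range k, ξ i ω ∈ Set.Ico x (x + Δ)} ∩
    ({ω | Δ ≤ ξ k ω} ∩ (fun ω m => ξ (k + 1 + m) ω) ⁻¹' nonnegPartialSums)

theorem measurableSet_escapeEvent (hmeas : ∀ n, Measurable (ξ n)) (x Δ : ℝ) (k : ℕ) :
    MeasurableSet (escapeEvent ξ x Δ k) :=
  (Finset.measurable_sum _ (fun i _ => hmeas i) measurableSet_Ico).inter
    ((measurableSet_le measurable_const (hmeas k)).inter
      (measurable_pi_lambda _ (fun _ => hmeas _) measurableSet_nonnegPartialSums))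

theorem pairwise_disjoint_escapeEvent (x Δ : ℝ) :
    Pairwise (Function.onFun Disjoint (escapeEvent ξ x Δ)) := by
  refine (pairwise_disjoint_on _).2 fun a b hab => Set.disjoint_left.2
    fun ω ⟨⟨hxa, _⟩, hΔ, hv⟩ ⟨⟨_, hb⟩, _⟩ => ?_
  have hab' := sum_range_le_of_shift_mem_nonnegPartialSums (v := fun i => ξ i ω) hv hab
  rw [sum_range_succ] at hab'
  linarith [Set.mem_ofPred.1 hΔ]

theorem measure_escapeEvent [IsProbabilityMeasure μ] (hmeas : ∀ n, Measurable (ξ n))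
    (h_indep : iIndepFun ξ μ) (hident : ∀ n, IdentDistrib (ξ n) (ξ 0) μ μ) (x Δ : ℝ) (k : ℕ) :
    μ (escapeEvent ξ x Δ k) = μ {ω | ∑ i ∈ range k, ξ i ω ∈ Set.Ico x (x + Δ)} *
      (μ {ω | Δ ≤ ξ 0 ω} * μ ((fun ω m => ξ m ω) ⁻¹' nonnegPartialSums)) := by
  let m : ℕ → MeasurableSpace Ω := fun i => .comap (ξ i) inferInstance
  have hξ : ∀ {i s}, i ∈ s → Measurable[⨆ j ∈ s, m j] (ξ i) := fun hi =>
    (comap_measurable _).mono (le_biSup m hi) le_rfl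
  have hpast : MeasurableSet[⨆ i ∈ Set.Iio k, m i]
      {ω | ∑ i ∈ range k, ξ i ω ∈ Set.Ico x (x + Δ)} :=
    Finset.measurable_sum _ (fun i hi => hξ (Set.mem_Iio.2 (mem_range.1 hi))) measurableSet_Ico
  have hfuture : MeasurableSet[⨆ i ∈ Set.Ioi k, m i]
      ((fun ω m => ξ (k + 1 + m) ω) ⁻¹' nonnegPartialSums) := by
    have hξ' : ∀ j, Measurable[⨆ i ∈ Set.Ioi k, m i] (ξ (k + 1 + j)) :=
      fun j => hξ (Set.mem_Ioi.2 (by omega))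
    exact (by fun_prop : Measurable[⨆ i ∈ Set.Ioi k, m i] fun ω j => ξ (k + 1 + j) ω)
      measurableSet_nonnegPartialSums
  have hshift : μ ((fun ω m => ξ (k + 1 + m) ω) ⁻¹' nonnegPartialSums) =
      μ ((fun ω m => ξ m ω) ⁻¹' nonnegPartialSums) := by
    rw [← Measure.map_apply (by fun_prop) measurableSet_nonnegPartialSums,
      ← Measure.map_apply (by fun_prop) measurableSet_nonnegPartialSums,
      h_indep.map_shift_eq_map hmeas hident]
  have hjump : μ {ω | Δ ≤ ξ k ω} = μ {ω | Δ ≤ ξ 0 ω} :=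
    (hident k).measure_mem_eq (s := Set.Ici Δ) measurableSet_Ici
  rw [escapeEvent, iIndep.measure_inter_inter_eq_mul
    (fun i => (hmeas i).comap_le) ((iIndepFun_iff_iIndep _ _ _).1 h_indep) hpast
    (measurableSet_le measurable_const (comap_measurable _)) hfuture, hshift, hjump]

theorem measure_iInf_sum_range_eq_zero_le
    (hdrift : ∀ᵐ ω ∂μ, Tendsto (fun n => ∑ i ∈ range n, ξ i ω) atTop atTop) :
    μ {ω | ⨅ k, ∑ i ∈ range k, ξ i ω = 0} ≤ μ ((fun ω m => ξ m ω) ⁻¹' nonnegPartialSums) := by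
  refine measure_mono_ae ?_
  filter_upwards [hdrift] with ω hω hinf j
  exact hinf ▸ ciInf_le_of_tendsto_atTop hω j

theorem tsum_measure_mul_le [IsProbabilityMeasure μ] (hmeas : ∀ n, Measurable (ξ n))
    (h_indep : iIndepFun ξ μ) (hident : ∀ n, IdentDistrib (ξ n) (ξ 0) μ μ) {x Δ : ℝ} {n : ℕ}
    {A : Set Ω} (hA : ∀ᵐ ω ∂μ, ∀ k, ∑ i ∈ range (n + k), ξ i ω ∈ Set.Ico x (x + Δ) → ω ∈ A) :
    (∑' k, μ {ω | ∑ i ∈ range (n + k), ξ i ω ∈ Set.Ico x (x + Δ)}) *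
      (μ {ω | Δ ≤ ξ 0 ω} * μ ((fun ω m => ξ m ω) ⁻¹' nonnegPartialSums)) ≤ μ A :=
  calc _ = ∑' k, μ (escapeEvent ξ x Δ (n + k)) := by
        rw [← ENNReal.tsum_mul_right]
        simp only [measure_escapeEvent hmeas h_indep hident]
    _ = μ (⋃ k, escapeEvent ξ x Δ (n + k)) :=
        (measure_iUnion ((pairwise_disjoint_escapeEvent x Δ).comp_of_injective
          (add_right_injective n)) fun k => measurableSet_escapeEvent hmeas x Δ _).symm
    _ ≤ μ A := by
        refine measure_mono_ae ?_
        filter_upwards [hA] with ω hω hE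
        obtain ⟨k, hk⟩ := Set.mem_iUnion.1 hE
        exact hω k hk.1

end RandomWalk

end ProbabilityTheory

theorem stmt2_general {Ω : Type*} [MeasureSpace Ω] [IsProbabilityMeasure (ℙ : Measure Ω)]
    (ξ : ℕ → Ω → ℝ)
    (hmeas : ∀ n, Measurable (ξ n))
    (hindep : iIndepFun ξ ℙ)
    (hident : ∀ n, IdentDistrib (ξ n) (ξ 0) ℙ ℙ)
    (hint : Integrable (ξ 0) ℙ)
    (hμpos : 0 < ∫ ω, ξ 0 ω ∂ℙ)
    (S : ℕ → Ω → ℝ) (hS : ∀ n ω, S n ω = ∑ i ∈ Finset.range n, ξ i ω)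
    (γ : ENNReal) (hγ : γ = ℙ {ω | (⨅ k : ℕ, S k ω) = 0})
    (x Δ : ℝ)
    (n : ℕ) :
    ∑' k : ℕ, ℙ {ω | S (n + k) ω ∈ Set.Ico x (x + Δ)} ≤
      ℙ {ω | S n ω + (⨅ k : ℕ, (S (n + k) ω - S n ω)) < x + Δ} /
        (γ * ℙ {ω | Δ ≤ ξ 0 ω}) := by
  obtain rfl : S = fun n ω => ∑ i ∈ range n, ξ i ω := funext fun n => funext (hS n)
  set A := {ω | ∑ i ∈ range n, ξ i ω +
    ⨅ k : ℕ, (∑ i ∈ range (n + k), ξ i ω - ∑ i ∈ range n, ξ i ω) < x + Δ}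
  have hdrift := ae_tendsto_sum_range_atTop hint (fun i j hij => hindep.indepFun hij) hident hμpos
  have hvisit : ∀ᵐ ω ∂ℙ, ∀ k, ∑ i ∈ range (n + k), ξ i ω ∈ Set.Ico x (x + Δ) → ω ∈ A := by
    filter_upwards [hdrift] with ω hω k hk
    exact (add_iInf_sub_le_of_tendsto_atTop hω n k).trans_lt hk.2
  rcases eq_or_ne (ℙ A) 0 with hA | hA
  · refine (ENNReal.tsum_eq_zero.2 fun k => measure_mono_null_ae ?_ hA).trans_le zero_le
    filter_upwards [hvisit] with ω hω using hω k
  rw [ENNReal.le_div_iff_mul_le (Or.inr hA) (Or.inl (by rw [hγ]; finiteness))]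
  calc _ ≤ (∑' k, ℙ {ω | ∑ i ∈ range (n + k), ξ i ω ∈ Set.Ico x (x + Δ)}) *
        (ℙ {ω | Δ ≤ ξ 0 ω} * ℙ ((fun ω m => ξ m ω) ⁻¹' nonnegPartialSums)) := by
        rw [mul_comm γ]
        gcongr
        exact hγ ▸ measure_iInf_sum_range_eq_zero_le hdrift
    _ ≤ ℙ A := tsum_measure_mul_le hmeas hindep hident hvisit

/-- For a random walk with i.i.d. jumps with positive mean, if
`F₊(Δ) = P(ξ ≥ Δ) > 0` then for any `n ≥ 1`,
`∑_{k ≥ n} P(S k ∈ [x, x+Δ)) ≤ P(S n + S̲⁽ⁿ⁾ < x + Δ) / (γ F₊(Δ))`,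
where `S̲⁽ⁿ⁾ = inf_{k ≥ n} (S k - S n)` and `γ = P(inf_{k ≥ 0} S k = 0)`. -/
theorem stmt2 {Ω : Type*} [MeasureSpace Ω] [IsProbabilityMeasure (ℙ : Measure Ω)]
    (ξ : ℕ → Ω → ℝ)
    (hmeas : ∀ n, Measurable (ξ n))
    (hindep : iIndepFun ξ ℙ)
    (hident : ∀ n, IdentDistrib (ξ n) (ξ 0) ℙ ℙ)
    (hint : Integrable (ξ 0) ℙ)
    (hμpos : 0 < ∫ ω, ξ 0 ω ∂ℙ)
    (S : ℕ → Ω → ℝ) (hS : ∀ n ω, S n ω = ∑ i ∈ Finset.range n, ξ i ω)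
    (γ : ENNReal) (hγ : γ = ℙ {ω | (⨅ k : ℕ, S k ω) = 0})
    (x Δ : ℝ) (hΔ : 0 < Δ)
    (hF : 0 < ℙ {ω | Δ ≤ ξ 0 ω})
    (n : ℕ) (hn : 1 ≤ n) :
    ∑' k : ℕ, ℙ {ω | S (n + k) ω ∈ Set.Ico x (x + Δ)} ≤
      ℙ {ω | S n ω + (⨅ k : ℕ, (S (n + k) ω - S n ω)) < x + Δ} /
        (γ * ℙ {ω | Δ ≤ ξ 0 ω}) :=
  stmt2_general ξ hmeas hindep hident hint hμpos S hS γ hγ x Δ n
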